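/- Let h : ℝ² × ℝ → ℝ² be continuously differentiable in x with vᵀ (∂h/∂x)(x,t) v ≤ −c‖v‖² for all (x,t,v), where c > 0, and let r : ℝ → ℝ² be continuous. If x₁,…,x_N : ℝ → ℝ² all solve ẋ_k(t) = h(x_k(t),t) + r(t), then for all i, j, ‖x_i(t) − x_j(t)‖ ≤ e^{−ct}‖x_i(0) − x_j(0)‖; in particular all trajectories synchronize exponentially: ‖x_i(t) − x_j(t)‖ → 0 as t → ∞. -/

import Mathlib

/-!
Subtracting the equations of two trajectories cancels the common input `r`, so the difference
`e = x_i - x_j` satisfies `ė = h(x_i, t) - h(x_j, t)`. Integrating the Jacobian bound along the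
segment from `x_j` to `x_i` gives `⟪h a t - h b t, a - b⟫ ≤ -c ‖a - b‖²`, hence
`d/dt ‖e‖² ≤ -2c ‖e‖²`, and `exp (2ct) ‖e t‖²` is antitone.
-/

open Real Filter
open scoped RealInnerProductSpace Topology

section InnerProductSpace

variable {E : Type*} [NormedAddCommGroup E] [InnerProductSpace ℝ E]

theorem inner_sub_sub_le_of_inner_fderiv_le {f : E → E} {c : ℝ} (hf : Differentiable ℝ f)
    (hjac : ∀ x v, ⟪fderiv ℝ f x v, v⟫ ≤ -c * ‖v‖ ^ 2) (a b : E) :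
    ⟪f a - f b, a - b⟫ ≤ -c * ‖a - b‖ ^ 2 := by
  set v := a - b
  let g : ℝ → ℝ := fun s => ⟪f (b + s • v), v⟫
  have hg : ∀ s, HasDerivAt g ⟪fderiv ℝ f (b + s • v) v, v⟫ s := by
    intro s
    have hline : HasDerivAt (fun s : ℝ => b + s • v) v s := by
      simpa using ((hasDerivAt_id s).smul_const v).const_add b
    simpa using ((hf _).hasFDerivAt.comp_hasDerivAt s hline).inner ℝ (hasDerivAt_const s v)
  have hslope := image_sub_le_mul_sub_of_deriv_le (fun s => (hg s).differentiableAt)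
    (fun s => (hg s).deriv ▸ hjac _ v) zero_le_one
  have hba : b + v = a := add_sub_cancel b a
  simpa [g, hba, inner_sub_left] using hslope

theorem norm_le_exp_mul_norm_of_inner_deriv_le {e e' : ℝ → E} {c : ℝ}
    (he : ∀ t, HasDerivAt e (e' t) t) (hdiss : ∀ t, ⟪e' t, e t⟫ ≤ -c * ‖e t‖ ^ 2)
    {s t : ℝ} (hst : s ≤ t) : ‖e t‖ ≤ exp (-c * (t - s)) * ‖e s‖ := by
  let F : ℝ → ℝ := fun t => exp (2 * c * t) * ‖e t‖ ^ 2
  have hF : ∀ t, HasDerivAt F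
      (2 * c * exp (2 * c * t) * ‖e t‖ ^ 2 + exp (2 * c * t) * (2 * ⟪e t, e' t⟫)) t := by
    intro t
    have hexp : HasDerivAt (fun t => exp (2 * c * t)) (2 * c * exp (2 * c * t)) t := by
      simpa [mul_comm] using ((hasDerivAt_id t).const_mul (2 * c)).exp
    exact hexp.mul (he t).norm_sq
  have hF_anti : Antitone F := by
    refine antitone_of_hasDerivAt_nonpos hF fun t => ?_
    have hdt := hdiss t
    rw [real_inner_comm] at hdt
    have := mul_le_mul_of_nonneg_left hdt (exp_pos (2 * c * t)).le
    simp only [Pi.zero_apply]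
    linarith
  have hsq : ‖e t‖ ^ 2 ≤ (exp (-c * (t - s)) * ‖e s‖) ^ 2 := by
    have hFts : exp (2 * c * t) * ‖e t‖ ^ 2 ≤ exp (2 * c * s) * ‖e s‖ ^ 2 := hF_anti hst
    have hexp : exp (2 * c * t) * exp (-c * (t - s)) ^ 2 = exp (2 * c * s) := by
      rw [← exp_nat_mul, ← exp_add]; ring_nf
    rw [mul_pow, ← mul_le_mul_iff_of_pos_left (exp_pos (2 * c * t)), ← mul_assoc, hexp]
    exact hFts
  exact (pow_le_pow_iff_left₀ (norm_nonneg _) (by positivity) two_ne_zero).1 hsq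

end InnerProductSpace

theorem partial_contraction_synchronization_general
    (c : ℝ) (hc : 0 < c) (N : ℕ)
    (h : EuclideanSpace ℝ (Fin 2) → ℝ → EuclideanSpace ℝ (Fin 2))
    (hh : ∀ t : ℝ, ContDiff ℝ 1 (fun y => h y t))
    (hjac : ∀ (x : EuclideanSpace ℝ (Fin 2)) (t : ℝ) (v : EuclideanSpace ℝ (Fin 2)),
      ⟪fderiv ℝ (fun y => h y t) x v, v⟫ ≤ -c * ‖v‖ ^ 2)
    (r : ℝ → EuclideanSpace ℝ (Fin 2))
    (x : Fin N → ℝ → EuclideanSpace ℝ (Fin 2))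
    (hx : ∀ (k : Fin N) (t : ℝ), HasDerivAt (x k) (h (x k t) t + r t) t) :
    ∀ i j : Fin N,
      (∀ t : ℝ, 0 ≤ t → ‖x i t - x j t‖ ≤ Real.exp (-c * t) * ‖x i 0 - x j 0‖) ∧
      Tendsto (fun t => ‖x i t - x j t‖) atTop (𝓝 0) := by
  intro i j
  have hmono : ∀ t a b, ⟪h a t - h b t, a - b⟫ ≤ -c * ‖a - b‖ ^ 2 := fun t =>
    inner_sub_sub_le_of_inner_fderiv_le ((hh t).differentiable one_ne_zero) (hjac · t)
  have hbound : ∀ t : ℝ, 0 ≤ t → ‖x i t - x j t‖ ≤ exp (-c * t) * ‖x i 0 - x j 0‖ := by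
    intro t ht
    simpa using norm_le_exp_mul_norm_of_inner_deriv_le (e := fun t => x i t - x j t)
      (fun t => (hx i t).sub (hx j t))
      (fun t => by simpa only [add_sub_add_right_eq_sub] using hmono t (x i t) (x j t)) ht
  have hdecay : Tendsto (fun t => exp (-c * t) * ‖x i 0 - x j 0‖) atTop (𝓝 0) := by
    simpa using (tendsto_exp_atBot.comp
      (tendsto_id.const_mul_atTop_of_neg (neg_neg_of_pos hc))).mul_const ‖x i 0 - x j 0‖
  refine ⟨hbound, squeeze_zero' (.of_forall fun t => norm_nonneg _) ?_ hdecay⟩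
  filter_upwards [eventually_ge_atTop 0] with t ht
  exact hbound t ht

theorem partial_contraction_synchronization
    (c : ℝ) (hc : 0 < c) (N : ℕ)
    (h : EuclideanSpace ℝ (Fin 2) → ℝ → EuclideanSpace ℝ (Fin 2))
    (hh : ∀ t : ℝ, ContDiff ℝ 1 (fun y => h y t))
    (hjac : ∀ (x : EuclideanSpace ℝ (Fin 2)) (t : ℝ) (v : EuclideanSpace ℝ (Fin 2)),
      ⟪fderiv ℝ (fun y => h y t) x v, v⟫ ≤ -c * ‖v‖ ^ 2)
    (r : ℝ → EuclideanSpace ℝ (Fin 2)) (hr : Continuous r)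
    (x : Fin N → ℝ → EuclideanSpace ℝ (Fin 2))
    (hx : ∀ (k : Fin N) (t : ℝ), HasDerivAt (x k) (h (x k t) t + r t) t) :
    ∀ i j : Fin N,
      (∀ t : ℝ, 0 ≤ t → ‖x i t - x j t‖ ≤ Real.exp (-c * t) * ‖x i 0 - x j 0‖) ∧
      Tendsto (fun t => ‖x i t - x j t‖) atTop (𝓝 0) :=
  partial_contraction_synchronization_general c hc N h hh hjac r x hx
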